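/- arXiv:1302.5487 — 2 statements merged into one kernel-verified Lean document; each statement's English description precedes it below -/
import Mathlib

section
/- Let f be a monic complex polynomial with all N₀ roots z₁,…,z_{N₀} in the open unit disk, and write f(z) = ∑_{k=0}^{N₀} b_k z^k with b_{N₀} = 1. Let μ_k = ∑_{j=1}^{N₀} z_j^k be the power sums. Given numbers μ̃_1,…,μ̃_{N₀} with |μ̃_k − μ_k| < γ for some 0 ≤ γ ≤ 1, define b̃_{N₀} = 1 and recursively b̃_{N₀−k} = −(1/k) ∑_{l=1}^{k} μ̃_l b̃_{N₀−k+l} for 1 ≤ k ≤ N₀. Then there exists a constant C depending only on N₀ such that |b̃_k − b_k| ≤ C·γ for all 0 ≤ k ≤ N₀. -/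
open Complex Polynomial Finset

/-!
The exact coefficients are signed elementary symmetric functions of the roots, so by Newton's
identities they satisfy the same recurrence as the perturbed ones, with the exact power sums in
place of the perturbed ones. Reading both recurrences from the leading coefficient
downwards, the error in the `n`-th step is an average of terms
`(μ̃_l - μ_l) b̃ + μ_l (b̃ - b)` over earlier steps; since `|μ_l| ≤ N₀`, the coefficients are
bounded by `2 ^ N₀` and `γ ≤ 1`, strong induction bounds the error by `2 ^ N₀ (N₀ + 2) ^ n γ`.
-/

theorem sum_filter_antidiagonal_fst_lt_eq_sum_Icc {M : Type*} [AddCommMonoid M] (k : ℕ)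
    (f : ℕ → ℕ → M) :
    ∑ a ∈ antidiagonal k with a.1 < k, f a.1 a.2 = ∑ l ∈ Icc 1 k, f (k - l) l := by
  refine sum_nbij' (fun a => a.2) (fun l => (k - l, l)) ?_ ?_ ?_ ?_ ?_ <;>
    simp only [mem_filter, HasAntidiagonal.mem_antidiagonal, mem_Icc, Prod.forall,
      Prod.mk.injEq, and_true, implies_true]
  · omega
  · omega
  · omega
  · rintro a b ⟨rfl, -⟩
    rw [Nat.add_sub_cancel]

theorem norm_mul_sub_mul_le {R : Type*} [SeminormedRing R] (a a' b b' : R) :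
    ‖a' * b' - a * b‖ ≤ ‖a' - a‖ * ‖b'‖ + ‖a‖ * ‖b' - b‖ :=
  calc ‖a' * b' - a * b‖ = ‖(a' - a) * b' + a * (b' - b)‖ := by noncomm_ring
    _ ≤ _ := (norm_add_le _ _).trans (add_le_add (norm_mul_le _ _) (norm_mul_le _ _))

/-- `e n` is the coefficient of `X ^ (N - n)`, so the recurrence runs downwards from the
leading coefficient `e 0`. -/
def SatisfiesNewtonRecurrence {K : Type*} [Field K] (p e : ℕ → K) (N : ℕ) : Prop :=
  ∀ n ∈ Icc 1 N, e n = -(1 / (n : K)) * ∑ l ∈ Icc 1 n, p l * e (n - l)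

theorem satisfiesNewtonRecurrence_comp_sub {K : Type*} [Field K] {p b : ℕ → K} {N : ℕ}
    (h : ∀ n ∈ Icc 1 N, b (N - n) = -(1 / (n : K)) * ∑ l ∈ Icc 1 n, p l * b (N - n + l)) :
    SatisfiesNewtonRecurrence p (fun n => b (N - n)) N := by
  intro n hn
  show b (N - n) = _
  rw [h n hn]
  refine congrArg _ (sum_congr rfl fun l hl => ?_)
  rw [mem_Icc] at hn hl
  rw [show N - n + l = N - (n - l) by omega]

section Stability

variable {𝕜 : Type*} [RCLike 𝕜] {p p' e e' : ℕ → 𝕜} {N : ℕ} {A P γ : ℝ}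

theorem SatisfiesNewtonRecurrence.norm_sub_le (hrec : SatisfiesNewtonRecurrence p e N)
    (hrec' : SatisfiesNewtonRecurrence p' e' N) (h0 : e' 0 = e 0) (he : ∀ n, ‖e n‖ ≤ A)
    (hp : ∀ l, ‖p l‖ ≤ P) (hp' : ∀ l ∈ Icc 1 N, ‖p' l - p l‖ ≤ γ) (hγ0 : 0 ≤ γ)
    (hγ1 : γ ≤ 1) (n : ℕ) (hn : n ≤ N) : ‖e' n - e n‖ ≤ A * (P + 2) ^ n * γ := by
  induction n using Nat.strong_induction_on with
  | _ n ih =>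
  have hA : 0 ≤ A := (norm_nonneg _).trans (he 0)
  have hP : 0 ≤ P := (norm_nonneg _).trans (hp 0)
  rcases n with _ | m
  · rw [h0, sub_self, norm_zero]
    positivity
  have hmem : m + 1 ∈ Icc 1 N := mem_Icc.2 ⟨by omega, hn⟩
  set D := A * (P + 2) ^ m
  have hAD : A ≤ D := le_mul_of_one_le_right hA (one_le_pow₀ (by linarith))
  have hterm : ∀ l ∈ Icc 1 (m + 1),
      ‖p' l * e' (m + 1 - l) - p l * e (m + 1 - l)‖ ≤ A * (P + 2) ^ (m + 1) * γ := by
    intro l hl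
    rw [mem_Icc] at hl
    have hdiff : ‖e' (m + 1 - l) - e (m + 1 - l)‖ ≤ D * γ :=
      (ih (m + 1 - l) (by omega) (by omega)).trans <|
        mul_le_mul_of_nonneg_right
          (mul_le_mul_of_nonneg_left (pow_le_pow_right₀ (by linarith) (by omega)) hA) hγ0
    have he' : ‖e' (m + 1 - l)‖ ≤ A + D :=
      calc ‖e' (m + 1 - l)‖ ≤ ‖e (m + 1 - l)‖ + ‖e' (m + 1 - l) - e (m + 1 - l)‖ :=
            norm_le_norm_add_norm_sub' _ _
        _ ≤ A + D := add_le_add (he _) (hdiff.trans (mul_le_of_le_one_right (by positivity) hγ1))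
    calc ‖p' l * e' (m + 1 - l) - p l * e (m + 1 - l)‖
        ≤ ‖p' l - p l‖ * ‖e' (m + 1 - l)‖ + ‖p l‖ * ‖e' (m + 1 - l) - e (m + 1 - l)‖ :=
          norm_mul_sub_mul_le _ _ _ _
      _ ≤ γ * (A + D) + P * (D * γ) := by
          gcongr
          · exact hp' l (mem_Icc.2 ⟨hl.1, by omega⟩)
          · exact hp l
      _ ≤ (P + 2) * D * γ := by nlinarith
      _ = A * (P + 2) ^ (m + 1) * γ := by ring
  calc ‖e' (m + 1) - e (m + 1)‖
      = ‖(1 / ((m + 1 : ℕ) : 𝕜)) *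
          ∑ l ∈ Icc 1 (m + 1), (p' l * e' (m + 1 - l) - p l * e (m + 1 - l))‖ := by
        rw [hrec' _ hmem, hrec _ hmem, sum_sub_distrib, ← norm_neg]
        congr 1
        ring
    _ ≤ 1 / (m + 1 : ℕ) * ∑ _l ∈ Icc 1 (m + 1), A * (P + 2) ^ (m + 1) * γ := by
        rw [norm_mul, norm_div, norm_one, RCLike.norm_natCast]
        gcongr
        exact norm_sum_le_of_le _ hterm
    _ = A * (P + 2) ^ (m + 1) * γ := by
        rw [sum_const, Nat.card_Icc, Nat.add_sub_cancel, nsmul_eq_mul]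
        field_simp

end Stability

section NewtonIdentities

variable {σ : Type*} [Fintype σ]

theorem mul_signed_esymm_eq_neg_sum {R : Type*} [CommRing R] (x : σ → R) (k : ℕ) :
    (k : R) * ((-1) ^ k * (univ.val.map x).esymm k) =
      -∑ l ∈ Icc 1 k, (∑ j, x j ^ l) * ((-1) ^ (k - l) * (univ.val.map x).esymm (k - l)) := by
  have newton := congrArg (MvPolynomial.aeval x) (MvPolynomial.mul_esymm_eq_sum σ R k)
  simp only [map_mul, map_pow, map_neg, map_one, map_natCast, map_sum,
    MvPolynomial.aeval_esymm_eq_multiset_esymm, MvPolynomial.psum, MvPolynomial.aeval_X] at newton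
  rw [sum_filter_antidiagonal_fst_lt_eq_sum_Icc k
    (fun i l => (-1) ^ i * (univ.val.map x).esymm i * ∑ j, x j ^ l)] at newton
  rw [mul_left_comm, newton, ← mul_assoc, ← pow_add, Odd.neg_one_pow ⟨k, by ring⟩, neg_one_mul,
    neg_inj]
  exact sum_congr rfl fun l _ => mul_comm _ _

theorem satisfiesNewtonRecurrence_signed_esymm {K : Type*} [Field K] [CharZero K] (x : σ → K)
    (N : ℕ) :
    SatisfiesNewtonRecurrence (fun l => ∑ j, x j ^ l)
      (fun n => (-1) ^ n * (univ.val.map x).esymm n) N := by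
  intro n hn
  have hn0 : (n : K) ≠ 0 := Nat.cast_ne_zero.2 (by rw [mem_Icc] at hn; omega)
  rw [neg_mul, ← mul_neg, ← mul_signed_esymm_eq_neg_sum, one_div, inv_mul_cancel_left₀ hn0]

theorem coeff_prod_X_sub_C_card_sub {R : Type*} [CommRing R] (x : σ → R) {n : ℕ}
    (hn : n ≤ Fintype.card σ) :
    (∏ j, (X - C (x j))).coeff (Fintype.card σ - n) = (-1) ^ n * (univ.val.map x).esymm n := by
  have hcard : Multiset.card (univ.val.map x) = Fintype.card σ := by simp
  have vieta := Multiset.prod_X_sub_C_coeff (univ.val.map x) (k := Fintype.card σ - n) (by omega)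
  rwa [Multiset.map_map, hcard, Nat.sub_sub_self hn] at vieta

variable {𝕜 : Type*} [RCLike 𝕜] {x : σ → 𝕜}

theorem norm_esymm_le_two_pow (hx : ∀ j, ‖x j‖ ≤ 1) (n : ℕ) :
    ‖(univ.val.map x).esymm n‖ ≤ 2 ^ Fintype.card σ := by
  rw [esymm_map_val]
  calc ‖∑ t ∈ powersetCard n univ, ∏ j ∈ t, x j‖ ≤ ∑ _t ∈ powersetCard n univ, (1 : ℝ) :=
        norm_sum_le_of_le _ fun t _ => by
          rw [norm_prod]
          exact prod_le_one (fun _ _ => norm_nonneg _) fun j _ => hx j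
    _ = (Fintype.card σ).choose n := by simp [card_powersetCard]
    _ ≤ 2 ^ Fintype.card σ := mod_cast Nat.choose_le_two_pow _ _

theorem norm_psum_le_card (hx : ∀ j, ‖x j‖ ≤ 1) (l : ℕ) :
    ‖∑ j, x j ^ l‖ ≤ Fintype.card σ :=
  calc ‖∑ j, x j ^ l‖ ≤ ∑ _j : σ, (1 : ℝ) :=
        norm_sum_le_of_le _ fun j _ => by
          rw [norm_pow]
          exact pow_le_one₀ (norm_nonneg _) (hx j)
    _ = Fintype.card σ := by simp

end NewtonIdentities

/-- Stability of Newton's identities under perturbation of the power sums. -/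
theorem stmt_1 (N₀ : ℕ) :
    ∃ C : ℝ, ∀ (z : Fin N₀ → ℂ) (μt bt : ℕ → ℂ) (γ : ℝ),
      (∀ j, ‖z j‖ < 1) →
      0 ≤ γ → γ ≤ 1 →
      (∀ k ∈ Finset.Icc 1 N₀, ‖μt k - ∑ j, z j ^ k‖ < γ) →
      bt N₀ = 1 →
      (∀ k ∈ Finset.Icc 1 N₀,
        bt (N₀ - k) = -(1 / (k : ℂ)) * ∑ l ∈ Finset.Icc 1 k, μt l * bt (N₀ - k + l)) →
      ∀ k ≤ N₀,
        ‖bt k - (∏ j, (X - Polynomial.C (z j))).coeff k‖ ≤ C * γ := by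
  refine ⟨2 ^ N₀ * (N₀ + 2) ^ N₀, fun z μt bt γ hz hγ0 hγ1 hμ hbt0 hbt k hk => ?_⟩
  have hz' : ∀ j, ‖z j‖ ≤ 1 := fun j => (hz j).le
  have hstable := (satisfiesNewtonRecurrence_signed_esymm z N₀).norm_sub_le
    (satisfiesNewtonRecurrence_comp_sub hbt) (by simp [hbt0, Multiset.esymm])
    (fun n => by simpa using norm_esymm_le_two_pow hz' n) (norm_psum_le_card hz')
    (fun l hl => (hμ l hl).le) hγ0 hγ1 (N₀ - k) (Nat.sub_le _ _)
  have hcoeff := coeff_prod_X_sub_C_card_sub z (n := N₀ - k) (by simp)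
  simp only [Fintype.card_fin, Nat.sub_sub_self hk] at hstable hcoeff
  rw [hcoeff]
  refine hstable.trans ?_
  gcongr
  · linarith
  · exact Nat.sub_le _ _
end

section
/- Let d ≥ 1 and let g be a complex polynomial of degree at most d−1. Suppose h is another complex polynomial of degree at most d−1 with |h(x)| = |g(x)| for all x ∈ ℝ and |h(x·e^{iα})| = |g(x·e^{iα})| for all x ∈ ℝ, where α/π is irrational. Then there exists a unimodular constant c ∈ ℂ, |c| = 1, with h = c·g. -/
/-!
Write `p p̄` for the polynomial extending `x ↦ ‖p x‖²` from `ℝ` to `ℂ`; its roots are those of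
`p` together with their conjugates. The hypotheses give `h h̄ = g ḡ` on `ℝ` and on `ω ℝ`
(`ω = exp (α i)`), so `D z = mult_h z - mult_g z` is odd under the reflections in both lines.
Their composition is the rotation by `ω²`, of infinite order, so `D` is constant on infinite
orbits; having finite support, it vanishes. Hence `h` and `g` have the same roots, and their
leading coefficients have the same modulus.
-/

open Complex Polynomial
open scoped ComplexConjugate

namespace Polynomial

noncomputable def mulConj (p : ℂ[X]) : ℂ[X] := p * p.map (starRingEnd ℂ)

theorem mulConj_eq_zero_iff {p : ℂ[X]} : mulConj p = 0 ↔ p = 0 := by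
  simp [mulConj]

theorem eval_ofReal_mulConj (p : ℂ[X]) (x : ℝ) :
    (mulConj p).eval (x : ℂ) = ((‖p.eval (x : ℂ)‖ ^ 2 : ℝ) : ℂ) := by
  have hx : (x : ℂ) = conj (x : ℂ) := (conj_ofReal x).symm
  rw [mulConj, eval_mul, hx, eval_map_apply, ← hx, mul_conj, normSq_eq_norm_sq]

theorem leadingCoeff_mulConj (p : ℂ[X]) :
    (mulConj p).leadingCoeff = ((‖p.leadingCoeff‖ ^ 2 : ℝ) : ℂ) := by
  rw [mulConj, leadingCoeff_mul, leadingCoeff_map, mul_conj, normSq_eq_norm_sq]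

theorem count_roots_mulConj (p : ℂ[X]) (z : ℂ) :
    (mulConj p).roots.count z = p.roots.count z + p.roots.count (conj z) := by
  rcases eq_or_ne p 0 with rfl | hp
  · simp [mulConj]
  rw [mulConj, roots_mul (mulConj_eq_zero_iff.not.mpr hp), (IsAlgClosed.splits p).roots_map,
    Multiset.count_add, ← Multiset.count_map_eq_count' _ _ (starRingEnd ℂ).injective (conj z),
    conj_conj]

theorem mulConj_eq_of_norm_eval_ofReal_eq {p q : ℂ[X]}
    (hpq : ∀ x : ℝ, ‖p.eval (x : ℂ)‖ = ‖q.eval (x : ℂ)‖) : mulConj p = mulConj q :=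
  eq_of_infinite_eval_eq _ _ <| (Set.infinite_range_of_injective ofReal_injective).mono <| by
    rintro _ ⟨x, rfl⟩
    simp [eval_ofReal_mulConj, hpq]

theorem count_roots_comp_C_mul_X {R : Type*} [CommRing R] [IsDomain R] [DecidableEq R]
    (p : R[X]) {a : R} (ha : IsUnit a) (z : R) :
    (p.comp (C a * X)).roots.count z = p.roots.count (a * z) := by
  simpa [count_roots] using rootMultiplicity_comp_C_mul_X_add_C p a 0 z ha

end Polynomial

theorem Complex.injective_pow_exp_mul_I {α : ℝ} (hα : Irrational (α / Real.pi)) :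
    Function.Injective fun n : ℕ => exp (α * I) ^ n := by
  intro m n hmn
  simp only [← exp_nat_mul] at hmn
  obtain ⟨k, hk⟩ := exp_eq_exp_iff_exists_int.mp hmn
  have him : (m : ℝ) * α = n * α + k * (2 * Real.pi) := by simpa using congrArg im hk
  by_contra hne
  have hmn' : (m : ℝ) - n ≠ 0 := sub_ne_zero.mpr (by exact_mod_cast hne)
  refine hα ⟨2 * k / (m - n), ?_⟩
  push_cast
  field_simp
  linarith

theorem eq_zero_of_invariant_of_injective_orbit {α M : Type*} [Zero M] {D : α → M} {T : α → α}
    (hD : ∀ z, D (T z) = D z) (hfin : D.support.Finite) {z : α}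
    (hz : Function.Injective fun n => T^[n] z) : D z = 0 := by
  by_contra h
  refine Set.infinite_of_injective_forall_mem hz (fun n => ?_) hfin
  induction n with
  | zero => exact h
  | succ n ih => rwa [Function.mem_support, Function.iterate_succ_apply', hD]

theorem Complex.eq_zero_of_odd_under_two_reflections {ω : ℂ} (hω : ‖ω‖ = 1)
    (hω' : Function.Injective fun n : ℕ => ω ^ n)
    {D : ℂ → ℤ} (hfin : D.support.Finite) (h₁ : ∀ z, D (conj z) = -D z)
    (h₂ : ∀ z, D (ω * conj z) = -D (ω * z)) (z : ℂ) : D z = 0 := by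
  have hrot : ∀ z, D (ω ^ 2 * z) = D z := by
    intro z
    have hωω : ω * conj ω = 1 := by rw [mul_conj, normSq_eq_norm_sq, hω]; norm_num
    have := h₂ (conj (ω * z))
    rw [conj_conj, map_mul, ← mul_assoc ω (conj ω), hωω, one_mul, h₁, neg_neg] at this
    rwa [pow_two, mul_assoc]
  rcases eq_or_ne z 0 with rfl | hz
  · have := h₁ 0
    rw [map_zero] at this
    omega
  refine eq_zero_of_invariant_of_injective_orbit (T := (ω ^ 2 * ·)) hrot hfin ?_
  simp only [mul_left_iterate_apply, ← pow_mul]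
  exact (mul_left_injective₀ hz).comp (hω'.comp (mul_right_injective₀ two_ne_zero))

namespace Polynomial

theorem roots_eq_of_mulConj_eq {p q : ℂ[X]} {ω : ℂ} (hω : ‖ω‖ = 1)
    (hω' : Function.Injective fun n : ℕ => ω ^ n) (h₁ : mulConj p = mulConj q)
    (h₂ : mulConj (p.comp (C ω * X)) = mulConj (q.comp (C ω * X))) :
    p.roots = q.roots := by
  classical
  have hωu : IsUnit ω := (norm_ne_zero_iff.mp (hω ▸ one_ne_zero)).isUnit
  let D : ℂ → ℤ := fun z => p.roots.count z - q.roots.count z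
  have hfin : D.support.Finite := by
    refine (p.roots + q.roots).toFinset.finite_toSet.subset fun z hz => ?_
    by_contra hz'
    simp only [Finset.mem_coe, Multiset.mem_toFinset, Multiset.mem_add, not_or] at hz'
    simp only [Function.mem_support, D, Multiset.count_eq_zero_of_notMem hz'.1,
      Multiset.count_eq_zero_of_notMem hz'.2, sub_self, ne_eq, not_true_eq_false] at hz
  have hD₁ : ∀ z, D (conj z) = -D z := fun z => by
    have := congrArg (fun r => r.roots.count z) h₁
    simp only [D, count_roots_mulConj] at this ⊢
    omega
  have hD₂ : ∀ z, D (ω * conj z) = -D (ω * z) := fun z => by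
    have := congrArg (fun r => r.roots.count z) h₂
    simp only [D, count_roots_mulConj, count_roots_comp_C_mul_X _ hωu] at this ⊢
    omega
  ext z
  have := eq_zero_of_odd_under_two_reflections hω hω' hfin hD₁ hD₂ z
  simp only [D] at this
  omega

theorem norm_leadingCoeff_eq_of_mulConj_eq {p q : ℂ[X]} (h : mulConj p = mulConj q) :
    ‖p.leadingCoeff‖ = ‖q.leadingCoeff‖ := by
  have := congrArg leadingCoeff h
  rw [leadingCoeff_mulConj, leadingCoeff_mulConj, ofReal_inj] at this
  exact (pow_left_inj₀ (norm_nonneg _) (norm_nonneg _) two_ne_zero).mp this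

theorem exists_norm_eq_one_eq_C_mul_of_roots_eq {K : Type*} [NormedField K] [IsAlgClosed K]
    {p q : K[X]} (hq : q ≠ 0) (hroots : p.roots = q.roots)
    (hlc : ‖p.leadingCoeff‖ = ‖q.leadingCoeff‖) : ∃ c : K, ‖c‖ = 1 ∧ p = C c * q := by
  have hlq : q.leadingCoeff ≠ 0 := leadingCoeff_ne_zero.mpr hq
  set c := p.leadingCoeff / q.leadingCoeff
  refine ⟨c, by rw [norm_div, hlc, div_self (norm_ne_zero_iff.mpr hlq)], ?_⟩
  calc p = C p.leadingCoeff * (p.roots.map fun a => X - C a).prod :=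
        (IsAlgClosed.splits p).eq_prod_roots
    _ = C c * (C q.leadingCoeff * (q.roots.map fun a => X - C a).prod) := by
      rw [hroots, ← mul_assoc, ← C_mul, div_mul_cancel₀ _ hlq]
    _ = C c * q := by rw [← (IsAlgClosed.splits q).eq_prod_roots]

end Polynomial

theorem stmt_18_general (g h : Polynomial ℂ)
    (α : ℝ) (hα : Irrational (α / Real.pi))
    (h1 : ∀ x : ℝ, ‖h.eval (x : ℂ)‖ = ‖g.eval (x : ℂ)‖)
    (h2 : ∀ x : ℝ, ‖h.eval ((x : ℂ) * Complex.exp (α * Complex.I))‖ =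
      ‖g.eval ((x : ℂ) * Complex.exp (α * Complex.I))‖) :
    ∃ c : ℂ, ‖c‖ = 1 ∧ h = Polynomial.C c * g := by
  set ω := exp (α * I)
  have hω : ‖ω‖ = 1 := norm_exp_ofReal_mul_I α
  have E₁ : mulConj h = mulConj g := mulConj_eq_of_norm_eval_ofReal_eq h1
  have E₂ : mulConj (h.comp (C ω * X)) = mulConj (g.comp (C ω * X)) :=
    mulConj_eq_of_norm_eval_ofReal_eq fun x => by
      simpa only [eval_comp, eval_mul, eval_C, eval_X, mul_comm ω] using h2 x
  rcases eq_or_ne g 0 with rfl | hg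
  · have hh : h = 0 := mulConj_eq_zero_iff.mp (E₁.trans (mulConj_eq_zero_iff.mpr rfl))
    exact ⟨1, norm_one, by rw [hh, mul_zero]⟩
  exact exists_norm_eq_one_eq_C_mul_of_roots_eq hg
    (roots_eq_of_mulConj_eq hω (injective_pow_exp_mul_I hα) E₁ E₂)
    (norm_leadingCoeff_eq_of_mulConj_eq E₁)

/-- Jaming's uniqueness: magnitudes on two lines meeting at an irrational angle
determine a polynomial up to a unimodular constant. -/
theorem stmt_18 (d : ℕ) (hd : 1 ≤ d) (g h : Polynomial ℂ)
    (hgdeg : g.natDegree ≤ d - 1) (hhdeg : h.natDegree ≤ d - 1)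
    (α : ℝ) (hα : Irrational (α / Real.pi))
    (h1 : ∀ x : ℝ, ‖h.eval (x : ℂ)‖ = ‖g.eval (x : ℂ)‖)
    (h2 : ∀ x : ℝ, ‖h.eval ((x : ℂ) * Complex.exp (α * Complex.I))‖ =
      ‖g.eval ((x : ℂ) * Complex.exp (α * Complex.I))‖) :
    ∃ c : ℂ, ‖c‖ = 1 ∧ h = Polynomial.C c * g :=
  stmt_18_general g h α hα h1 h2
end
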